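/- Let A be an algebraic curvature tensor on a nondegenerate inner product space V of finite dimension, with Ricci operator rho (the self-adjoint operator characterized by <rho x, y> = trace of z -> R(z,x)y). Then rho commutes with every Jacobi operator J(x) for all x in V if and only if rho commutes with every curvature operator R(x,y) for all x,y in V. -/

import Mathlib

/-!
With `E a b c d := A (ρ a) b c d`, self-adjointness of `ρ` turns both Videv conditions into
symmetries of `E`: commuting with every Jacobi operator says that `E a b b d` is symmetric in
`a, d`, commuting with every curvature operator says that `E` is antisymmetric in its first two
slots. For fixed `a`, `E a` is antisymmetric in its last two slots and satisfies the Bianchi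
identity in its last three, so it is recovered from its symmetrisation
`Q a b c d = E a b c d + E a c b d` as `3 E a b c d = Q a b c d - Q a b d c`. The Jacobi
condition makes `Q` symmetric in `a, d`, and together with the Bianchi identity this forces the
antisymmetry of `E` in `a, b`.
-/

structure IsCurvatureTensor {𝕜 V : Type*} [CommRing 𝕜] [AddCommGroup V] [Module 𝕜 V]
    (A : V →ₗ[𝕜] V →ₗ[𝕜] V →ₗ[𝕜] V →ₗ[𝕜] 𝕜) : Prop where
  swap_pairs : ∀ x y z w, A x y z w = A z w x y
  antisymm_left : ∀ x y z w, A x y z w = -A y x z w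
  bianchi : ∀ x y z w, A x y z w + A y z x w + A z x y w = 0

namespace IsCurvatureTensor

variable {𝕜 V : Type*} [CommRing 𝕜] [AddCommGroup V] [Module 𝕜 V]
  {A : V →ₗ[𝕜] V →ₗ[𝕜] V →ₗ[𝕜] V →ₗ[𝕜] 𝕜}

theorem antisymm_right (hA : IsCurvatureTensor A) (x y z w : V) :
    A x y z w = -A x y w z := by
  rw [hA.swap_pairs, hA.antisymm_left, hA.swap_pairs]

theorem bianchi_right (hA : IsCurvatureTensor A) (x y z w : V) :
    A x y z w + A x z w y + A x w y z = 0 := by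
  rw [hA.swap_pairs x y, hA.swap_pairs x z, hA.swap_pairs x w, hA.antisymm_right z w,
    hA.antisymm_right w y, hA.antisymm_right y z]
  linear_combination -hA.bianchi y z w x

theorem jacobi_symm (hA : IsCurvatureTensor A) (x y z : V) : A x y y z = A z y y x := by
  rw [hA.swap_pairs, hA.antisymm_left, hA.antisymm_right, neg_neg]

end IsCurvatureTensor

section
variable {𝕜 V : Type*} [Field 𝕜] [CharZero 𝕜] [AddCommGroup V] [Module 𝕜 V]

theorem antisymm_of_jacobi_symm (E : V → V →ₗ[𝕜] V →ₗ[𝕜] V →ₗ[𝕜] 𝕜)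
    (hanti₃₄ : ∀ a b c d, E a b c d = -E a b d c)
    (hbianchi : ∀ a b c d, E a b c d + E a c d b + E a d b c = 0)
    (hjacobi : ∀ a b d, E a b b d = E d b b a) (a b c d : V) :
    E a b c d = -E b a c d := by
  obtain ⟨Q, hQ⟩ : ∃ Q : V → V → V → V → 𝕜, ∀ a b c d, Q a b c d = E a b c d + E a c b d :=
    ⟨_, fun _ _ _ _ => rfl⟩
  have hQ_swap : ∀ a b c d, Q a b c d = Q d b c a := by
    intro a b c d
    have h := hjacobi a (b + c) d
    simp only [map_add, LinearMap.add_apply] at h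
    linear_combination hQ a b c d - hQ d b c a + h - hjacobi a b d - hjacobi a c d
  have hQ_cyc : ∀ a b c d, Q a b c d + Q b a c d + Q c a b d = 0 := by
    intro a b c d
    rw [hQ_swap a, hQ_swap b, hQ_swap c, hQ, hQ, hQ]
    linear_combination hbianchi d b c a + hbianchi d c b a
  have h3E : ∀ a b c d, 3 * E a b c d = Q a b c d - Q a b d c := by
    intro a b c d
    rw [hQ, hQ]
    linear_combination -hanti₃₄ a c b d + hanti₃₄ a b d c + hbianchi a b c d
  linear_combination (h3E a b c d + h3E b a c d + hQ_cyc a b c d - hQ_cyc a b d c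
    + hQ_swap d a b c) / 3

theorem jacobi_symm_of_antisymm (E : V → V →ₗ[𝕜] V →ₗ[𝕜] V →ₗ[𝕜] 𝕜)
    (hanti₁₂ : ∀ a b c d, E a b c d = -E b a c d) (hanti₃₄ : ∀ a b c d, E a b c d = -E a b d c)
    (hbianchi : ∀ a b c d, E a b c d + E a c d b + E a d b c = 0) (a b d : V) :
    E a b b d = E d b b a := by
  have hdiag : E b b a d = 0 := CharZero.eq_neg_self_iff.mp (hanti₁₂ b b a d)
  linear_combination hanti₁₂ a b b d - hanti₃₄ b a b d + hbianchi b a d b - hdiag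
    - hanti₁₂ d b b a

theorem jacobi_symm_iff_antisymm (E : V → V →ₗ[𝕜] V →ₗ[𝕜] V →ₗ[𝕜] 𝕜)
    (hanti₃₄ : ∀ a b c d, E a b c d = -E a b d c)
    (hbianchi : ∀ a b c d, E a b c d + E a c d b + E a d b c = 0) :
    (∀ a b d, E a b b d = E d b b a) ↔ ∀ a b c d, E a b c d = -E b a c d :=
  ⟨antisymm_of_jacobi_symm E hanti₃₄ hbianchi,
    fun h => jacobi_symm_of_antisymm E h hanti₃₄ hbianchi⟩

end

theorem LinearMap.BilinForm.comp_comm_iff_of_isSelfAdjoint {𝕜 V : Type*} [CommRing 𝕜]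
    [AddCommGroup V] [Module 𝕜 V] {B : LinearMap.BilinForm 𝕜 V} (hB : B.SeparatingLeft)
    {ρ : V →ₗ[𝕜] V} (hρ : B.IsSelfAdjoint ρ) (f : V →ₗ[𝕜] V) :
    ρ ∘ₗ f = f ∘ₗ ρ ↔ ∀ v w, B (f v) (ρ w) = B (f (ρ v)) w := by
  have hinj : Function.Injective B :=
    LinearMap.ker_eq_bot.mp (LinearMap.separatingLeft_iff_ker_eq_bot.mp hB)
  simp only [LinearMap.ext_iff, LinearMap.comp_apply, ← hρ _ _]
  exact forall_congr' fun v => ⟨fun h w => by rw [h], fun h => hinj (LinearMap.ext h)⟩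

namespace IsCurvatureTensor

variable {𝕜 V : Type*} [CommRing 𝕜] [AddCommGroup V] [Module 𝕜 V]
  {A : V →ₗ[𝕜] V →ₗ[𝕜] V →ₗ[𝕜] V →ₗ[𝕜] 𝕜} {B : LinearMap.BilinForm 𝕜 V}
  {R : V →ₗ[𝕜] V →ₗ[𝕜] V →ₗ[𝕜] V} {ρ : V →ₗ[𝕜] V}

theorem comp_comm_jacobiOperator_iff (hA : IsCurvatureTensor A) (hB : B.SeparatingLeft)
    (hR : ∀ x y z w, B (R x y z) w = A x y z w) {J : V → V →ₗ[𝕜] V}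
    (hJ : ∀ x y, J x y = R y x x) (hρ : B.IsSelfAdjoint ρ) :
    (∀ x, ρ ∘ₗ J x = J x ∘ₗ ρ) ↔ ∀ a b d, A (ρ a) b b d = A (ρ d) b b a := by
  simp only [LinearMap.BilinForm.comp_comm_iff_of_isSelfAdjoint hB hρ, hJ, hR,
    hA.jacobi_symm _ _ (ρ _)]
  exact ⟨fun h a b d => h b d a, fun h x v w => h w x v⟩

theorem comp_comm_curvatureOperator_iff (hA : IsCurvatureTensor A) (hB : B.SeparatingLeft)
    (hR : ∀ x y z w, B (R x y z) w = A x y z w) (hρ : B.IsSelfAdjoint ρ) :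
    (∀ x y, ρ ∘ₗ R x y = R x y ∘ₗ ρ) ↔ ∀ a b c d, A (ρ a) b c d = -A (ρ b) a c d := by
  simp only [LinearMap.BilinForm.comp_comm_iff_of_isSelfAdjoint hB hρ, hR]
  constructor
  · intro h a b c d
    calc A (ρ a) b c d = A c d a (ρ b) := by rw [hA.swap_pairs, h]
      _ = -A (ρ b) a c d := by rw [hA.swap_pairs, hA.antisymm_left]
  · intro h x y v w
    calc A x y v (ρ w) = -A (ρ w) v x y := by rw [hA.swap_pairs, hA.antisymm_left]
      _ = A x y (ρ v) w := by rw [← h, hA.swap_pairs]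

end IsCurvatureTensor

theorem stmt_3 {V : Type*} [AddCommGroup V] [Module ℝ V]
    (B : LinearMap.BilinForm ℝ V)
    (hBnd : B.Nondegenerate)
    (A : V →ₗ[ℝ] V →ₗ[ℝ] V →ₗ[ℝ] V →ₗ[ℝ] ℝ)
    (hpair : ∀ x y z w, A x y z w = A z w x y)
    (hanti : ∀ x y z w, A x y z w = -A y x z w)
    (hbianchi : ∀ x y z w, A x y z w + A y z x w + A z x y w = 0)
    (Rop : V →ₗ[ℝ] V →ₗ[ℝ] V →ₗ[ℝ] V)
    (hRop : ∀ x y z w, B (Rop x y z) w = A x y z w)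
    (Jop : V → V →ₗ[ℝ] V)
    (hJop : ∀ x y, Jop x y = Rop y x x)
    (rho : V →ₗ[ℝ] V) (hrho_sa : ∀ x y, B (rho x) y = B x (rho y)) :
    (∀ x, rho ∘ₗ Jop x = Jop x ∘ₗ rho) ↔
      (∀ x y, rho ∘ₗ Rop x y = Rop x y ∘ₗ rho) := by
  have hA : IsCurvatureTensor A := ⟨hpair, hanti, hbianchi⟩
  rw [hA.comp_comm_jacobiOperator_iff hBnd.1 hRop hJop hrho_sa, hA.comp_comm_curvatureOperator_iff hBnd.1 hRop hrho_sa]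
  exact jacobi_symm_iff_antisymm (fun a => A (rho a)) (fun a => hA.antisymm_right (rho a))
    (fun a => hA.bianchi_right (rho a))
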